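/- arXiv:0710.5874 — 9 statements merged into one kernel-verified Lean document; each statement's English description precedes it below -/
import Mathlib

section
/- Left decomposition for δ-separation: for any directed graph G = (V,E) and any subsets A, B, C ⊆ V and D ⊆ A, if C δ-separates A from B in G (A ir_δ B | C), then C δ-separates D from B in G (D ir_δ B | C). -/
open Set

variable {V : Type*}

/-- There is a directed path (a sequence of ≥ 2 distinct vertices joined by
directed edges) from `v` to `w`; i.e. `v` is an ancestor of `w`. -/
def DirPathConn (E : V → V → Prop) (v w : V) : Prop :=
  ∃ l : List V, l.Chain' E ∧ l.Nodup ∧ 2 ≤ l.length ∧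
    l.head? = some v ∧ l.getLast? = some w

/-- `an(A)`: vertices outside `A` that are ancestors of some element of `A`. -/
def anSet (E : V → V → Prop) (A : Set V) : Set V :=
  {v | v ∉ A ∧ ∃ a ∈ A, DirPathConn E v a}

/-- `An(A) = A ∪ an(A)`, the smallest ancestral set containing `A`. -/
def AnSet (E : V → V → Prop) (A : Set V) : Set V := A ∪ anSet E A

/-- `pa(A)`: parents of `A` outside of `A`. -/
def paSet (E : V → V → Prop) (A : Set V) : Set V :=
  {v | v ∉ A ∧ ∃ a ∈ A, E v a}

/-- `cl(A) = A ∪ pa(A)`, the closure of `A`. -/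
def clSet (E : V → V → Prop) (A : Set V) : Set V := A ∪ paSet E A

/-- The induced subgraph `G_A` (as an edge relation on `V` supported on `A`). -/
def inducedGraph (E : V → V → Prop) (A : Set V) : V → V → Prop :=
  fun j k => E j k ∧ j ∈ A ∧ k ∈ A

/-- `G^B`: delete from `G` every directed edge starting in `B`. -/
def delOut (E : V → V → Prop) (B : Set V) : V → V → Prop :=
  fun j k => E j k ∧ j ∉ B

/-- The moral graph `G^m`: distinct `j, k` are adjacent iff they are joined by
an edge in some direction or have a common child. -/
def moralGraph (E : V → V → Prop) : V → V → Prop :=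
  fun j k => j ≠ k ∧ (E j k ∨ E k j ∨ ∃ c, E j c ∧ E k c)

/-- `l` is an undirected path from `v` to `w` in the undirected graph `H`:
a sequence of ≥ 2 distinct vertices, consecutive ones adjacent. -/
def IsUPath (H : V → V → Prop) (l : List V) (v w : V) : Prop :=
  l.Chain' H ∧ l.Nodup ∧ 2 ≤ l.length ∧
    l.head? = some v ∧ l.getLast? = some w

/-- `A ⊥_g B | C` in the undirected graph `H`: every path from a vertex of `A`
to a vertex of `B` contains a vertex of `C`. -/
def uSep (H : V → V → Prop) (A B C : Set V) : Prop :=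
  ∀ v ∈ A, ∀ w ∈ B, ∀ l : List V, IsUPath H l v w → ∃ c ∈ C, c ∈ l

/-- δ-separation for pairwise disjoint `A, B, C`: `A ⊥_g B | C` in the moral
graph of the subgraph of `G^B` induced by `An(A ∪ B ∪ C)`. -/
def deltaSepDisjoint (E : V → V → Prop) (A B C : Set V) : Prop :=
  uSep (moralGraph (inducedGraph (delOut E B) (AnSet E (A ∪ B ∪ C)))) A B C

/-- δ-separation `A ir_δ B | C` for general (not necessarily disjoint) sets:
`C \ B` δ-separates `A \ (B ∪ C)` from `B`. -/
def deltaSep (E : V → V → Prop) (A B C : Set V) : Prop :=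
  deltaSepDisjoint E (A \ (B ∪ C)) B (C \ B)


lemma AnSet_mono (E : V → V → Prop) {S T : Set V} (hST : S ⊆ T) :
    AnSet E S ⊆ AnSet E T := by
  intro v hv
  rcases hv with hv | ⟨hvS, a, haS, hp⟩
  · exact Or.inl (hST hv)
  · by_cases hvT : v ∈ T
    · exact Or.inl hvT
    · exact Or.inr ⟨hvT, a, hST haS, hp⟩

lemma moral_mono {E F : V → V → Prop} (h : ∀ j k, E j k → F j k) :
    ∀ j k, moralGraph E j k → moralGraph F j k := by
  rintro j k ⟨hne, hjk | hkj | ⟨c, hjc, hkc⟩⟩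
  · exact ⟨hne, Or.inl (h _ _ hjk)⟩
  · exact ⟨hne, Or.inr (Or.inl (h _ _ hkj))⟩
  · exact ⟨hne, Or.inr (Or.inr ⟨c, h _ _ hjc, h _ _ hkc⟩)⟩

/-- Left decomposition for δ-separation. -/
theorem deltaSep_left_decomposition [Fintype V] (E : V → V → Prop)
    (hE : ∀ j k, E j k → j ≠ k) (A B C D : Set V) (hDA : D ⊆ A)
    (h : deltaSep E A B C) : deltaSep E D B C := by
  intro v hv w hw l hl
  have hsub : AnSet E (D \ (B ∪ C) ∪ B ∪ C \ B) ⊆ AnSet E (A \ (B ∪ C) ∪ B ∪ C \ B) := by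
    apply AnSet_mono
    intro x hx
    rcases hx with (hx | hx) | hx
    · exact Or.inl (Or.inl ⟨hDA hx.1, hx.2⟩)
    · exact Or.inl (Or.inr hx)
    · exact Or.inr hx
  have hv' : v ∈ A \ (B ∪ C) := ⟨hDA hv.1, hv.2⟩
  apply h v hv' w hw l
  obtain ⟨hc, hnd, hlen, hh, hlast⟩ := hl
  refine ⟨hc.imp ?_, hnd, hlen, hh, hlast⟩
  intro j k hjk
  exact moral_mono (fun j k hjk => ⟨hjk.1, hsub hjk.2.1, hsub hjk.2.2⟩) j k hjk
end

section
/- Left weak union for δ-separation: for any directed graph G = (V,E) and any subsets A, B, C ⊆ V and D ⊆ A, if C δ-separates A from B in G (A ir_δ B | C), then C ∪ D δ-separates A from B in G (A ir_δ B | C ∪ D). -/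
open Set

variable {V : Type*}

/-- Left weak union for δ-separation. -/
theorem deltaSep_left_weak_union [Fintype V] (E : V → V → Prop)
    (hE : ∀ j k, E j k → j ≠ k) (A B C D : Set V) (hDA : D ⊆ A)
    (h : deltaSep E A B C) : deltaSep E A B (C ∪ D) := by
  unfold deltaSep deltaSepDisjoint at h ⊢
  have hset : (A \ (B ∪ (C ∪ D))) ∪ B ∪ ((C ∪ D) \ B)
      = (A \ (B ∪ C)) ∪ B ∪ (C \ B) := by
    ext x
    have hxD : x ∈ D → x ∈ A := fun hx => hDA hx
    simp only [Set.mem_union, Set.mem_diff, Set.mem_union] at *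
    tauto
  rw [hset]
  intro v hv w hw l hl
  obtain ⟨c, hc, hcl⟩ := h v ⟨hv.1, fun hx => hv.2 (by
    rcases hx with hx | hx
    · exact Or.inl hx
    · exact Or.inr (Or.inl hx))⟩ w hw l hl
  exact ⟨c, ⟨Or.inl hc.1, hc.2⟩, hcl⟩
end

section
/- Left contraction for δ-separation: for any directed graph G = (V,E) and any subsets A, B, C, D ⊆ V, if C δ-separates A from B in G (A ir_δ B | C) and A ∪ C δ-separates D from B in G (D ir_δ B | A ∪ C), then C δ-separates A ∪ D from B in G ((A ∪ D) ir_δ B | C). -/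
open Set

variable {V : Type*}

/-!
Separation in an undirected graph is the absence of a walk that avoids the separator, so
everything is phrased with `Relation.ReflTransGen`. Let `T = An(A ∪ B ∪ C)` and
`S = An(A ∪ B ∪ C ∪ D)`, and follow a walk of `(G^B_S)^m` that avoids `C` from `(A ∪ D) \ (B ∪ C)`
to `w ∈ B` backwards from `w`. While it stays in `(G^B_T)^m` it cannot visit `A`, by the first
hypothesis. A step that leaves `(G^B_T)^m` touches a vertex `u ∈ S \ T`, which is an ancestor of
some `d ∈ D` through vertices outside `T`; reversing that directed path yields a walk of
`(G^B_S)^m` from `d` to `w` avoiding `A ∪ C`, against the second hypothesis. So the whole walk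
avoids `A` and lies in `(G^B_T)^m`, and its start, in `A` or in `D`, contradicts one of the two
hypotheses.
-/

open Relation

namespace List

variable {α : Type*} {r : α → α → Prop} {l : List α} {a b : α}

theorem exists_isChain_nodup_of_reflTransGen (h : ReflTransGen r a b) :
    ∃ l : List α, l.IsChain r ∧ l.Nodup ∧ l.head? = some a ∧ l.getLast? = some b ∧
      ∀ x ∈ l, ReflTransGen r x b := by
  induction h using ReflTransGen.head_induction_on with
  | refl => exact ⟨[b], .singleton _, nodup_singleton _, rfl, rfl, by simp [ReflTransGen.refl]⟩
  | @head a c hac hcb ih =>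
    obtain ⟨l, hl, hnd, hh, hlast, hreach⟩ := ih
    by_cases ha : a ∈ l
    · obtain ⟨s, t, rfl⟩ := append_of_mem ha
      refine ⟨a :: t, hl.suffix (suffix_append _ _), hnd.sublist (sublist_append_right _ _),
        rfl, ?_, fun x hx => hreach x (mem_append_right _ hx)⟩
      rwa [getLast?_append_cons] at hlast
    · obtain ⟨t, rfl⟩ := head?_eq_some_iff.1 hh
      refine ⟨a :: c :: t, hl.cons_cons hac, nodup_cons.2 ⟨ha, hnd⟩, rfl, ?_, ?_⟩
      · rwa [getLast?_cons_cons]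
      · rintro x (_ | ⟨_, hx⟩)
        exacts [.head hac hcb, hreach x hx]

theorem two_le_length_of_head?_of_getLast? (ha : l.head? = some a) (hb : l.getLast? = some b)
    (hab : a ≠ b) : 2 ≤ l.length := by
  match l, ha, hb with
  | [_], ha, hb => simp_all
  | _ :: _ :: _, _, _ => simp

theorem head_ne_getLast_of_nodup (hnd : l.Nodup) (hl : 2 ≤ l.length) (ha : l.head? = some a)
    (hb : l.getLast? = some b) : a ≠ b := by
  obtain ⟨t, rfl⟩ := head?_eq_some_iff.1 ha
  obtain ⟨c, t, rfl⟩ := exists_cons_of_length_pos (by simp at hl; omega : 0 < t.length)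
  rintro rfl
  rw [getLast?_cons_cons] at hb
  exact (nodup_cons.1 hnd).1 (mem_of_getLast? hb)

theorem IsChain.reflTransGen (hl : l.IsChain r) (ha : l.head? = some a)
    (hb : l.getLast? = some b) : ReflTransGen r a b := by
  obtain ⟨t, rfl⟩ := head?_eq_some_iff.1 ha
  refine relationReflTransGen_of_exists_isChain_cons t hl ?_
  simpa [getLast?_eq_some_getLast (cons_ne_nil a t)] using hb

end List

section

variable {E : V → V → Prop} {A B C D S T W : Set V} {u v w x y : V}

theorem dirPathConn_iff : DirPathConn E v w ↔ ReflTransGen E v w ∧ v ≠ w := by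
  constructor
  · rintro ⟨l, hl, hnd, hlen, hv, hw⟩
    exact ⟨List.IsChain.reflTransGen hl hv hw, List.head_ne_getLast_of_nodup hnd hlen hv hw⟩
  · rintro ⟨h, hvw⟩
    obtain ⟨l, hl, hnd, hv, hw, -⟩ := List.exists_isChain_nodup_of_reflTransGen h
    exact ⟨l, hl, hnd, List.two_le_length_of_head?_of_getLast? hv hw hvw, hv, hw⟩

theorem mem_AnSet_iff : x ∈ AnSet E W ↔ ∃ a ∈ W, ReflTransGen E x a := by
  constructor
  · rintro (hx | ⟨-, a, ha, hxa⟩)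
    exacts [⟨x, hx, .refl⟩, ⟨a, ha, (dirPathConn_iff.1 hxa).1⟩]
  · rintro ⟨a, ha, hxa⟩
    by_cases hx : x ∈ W
    · exact .inl hx
    · exact .inr ⟨hx, a, ha, dirPathConn_iff.2 ⟨hxa, fun h => hx (h ▸ ha)⟩⟩

theorem subset_AnSet : W ⊆ AnSet E W := subset_union_left

theorem paSet_AnSet : paSet E (AnSet E W) = ∅ := by
  refine eq_empty_of_forall_notMem fun u ⟨hu, x, hx, hux⟩ => hu ?_
  obtain ⟨a, ha, hxa⟩ := mem_AnSet_iff.1 hx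
  exact mem_AnSet_iff.2 ⟨a, ha, .head hux hxa⟩

theorem mem_of_reflTransGen_of_paSet_eq_empty (hT : paSet E T = ∅) (h : ReflTransGen E u x)
    (hx : x ∈ T) : u ∈ T := by
  induction h using ReflTransGen.head_induction_on with
  | refl => exact hx
  | head huy _ hy =>
    by_contra hu
    exact (eq_empty_iff_forall_notMem.1 hT) _ ⟨hu, _, hy, huy⟩

def avoidRel (H : V → V → Prop) (C : Set V) : V → V → Prop :=
  fun x y => H x y ∧ x ∉ C ∧ y ∉ C

theorem uSep_iff {H : V → V → Prop} (hAB : Disjoint A B) (hBC : Disjoint B C) :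
    uSep H A B C ↔ ∀ v ∈ A, ∀ w ∈ B, ¬ ReflTransGen (avoidRel H C) v w := by
  constructor
  · intro h v hv w hw hvw
    obtain ⟨l, hl, hnd, hv', hw', hreach⟩ := List.exists_isChain_nodup_of_reflTransGen hvw
    obtain ⟨c, hc, hcl⟩ := h v hv w hw l ⟨hl.imp fun _ _ => And.left, hnd,
      List.two_le_length_of_head?_of_getLast? hv' hw' (hAB.ne_of_mem hv hw), hv', hw'⟩
    rcases (hreach c hcl).cases_head with rfl | ⟨_, hc', -⟩
    exacts [hBC.ne_of_mem hw hc rfl, hc'.2.1 hc]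
  · rintro h v hv w hw l ⟨hl, -, -, hv', hw'⟩
    by_contra! hC
    refine h v hv w hw (List.IsChain.reflTransGen ?_ hv' hw')
    exact List.IsChain.imp_of_mem_imp (fun a b ha hb hab => ⟨hab, (hC a · ha), (hC b · hb)⟩) hl

def moralDelOut (E : V → V → Prop) (B S : Set V) : V → V → Prop :=
  moralGraph (inducedGraph (delOut E B) S)

theorem moralDelOut_comm : moralDelOut E B S x y ↔ moralDelOut E B S y x := by
  unfold moralDelOut moralGraph
  constructor <;> rintro ⟨hne, h | h | ⟨c, hx, hy⟩⟩ <;>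
    exact ⟨hne.symm, by tauto⟩

theorem moralDelOut_of_edge (h : E x y) (hx : x ∉ B) (hxS : x ∈ S) (hyS : y ∈ S) (hne : x ≠ y) :
    moralDelOut E B S x y :=
  ⟨hne, .inl ⟨⟨h, hx⟩, hxS, hyS⟩⟩

theorem moralDelOut.mem_left (h : moralDelOut E B S x y) : x ∈ S := by
  obtain ⟨-, h | h | ⟨c, hx, -⟩⟩ := h
  exacts [h.2.1, h.2.2, hx.2.1]

/-- The witness is `x` itself or the common child of a moral edge. -/
theorem exists_moralDelOut_not_mem (h : moralDelOut E B S x y) (hy : y ∈ T)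
    (hT : ¬ moralDelOut E B T x y) : ∃ u ∈ S, u ∉ T ∧ moralDelOut E B S u y := by
  by_cases hx : x ∈ T
  · obtain ⟨hne, ⟨e, -, -⟩ | ⟨e, -, -⟩ | ⟨c, ⟨ex, -, hcS⟩, ⟨ey, hyS, -⟩⟩⟩ := h
    · exact absurd ⟨hne, .inl ⟨e, hx, hy⟩⟩ hT
    · exact absurd ⟨hne, .inr (.inl ⟨e, hy, hx⟩)⟩ hT
    · by_cases hc : c ∈ T
      · exact absurd ⟨hne, .inr (.inr ⟨c, ⟨ex, hx, hc⟩, ⟨ey, hy, hc⟩⟩)⟩ hT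
      · exact ⟨c, hcS, hc, fun h => hc (h ▸ hy), .inr (.inl ⟨ey, hyS, hcS⟩)⟩
  · exact ⟨x, h.mem_left, hx, h⟩

/-- The directed path from `x` to `y` stays outside the ancestral set `T ⊇ B`, so its edges
survive in `G^B`; read backwards it is a walk of `(G^B_S)^m` avoiding `K`. -/
theorem reflTransGen_avoidRel_of_reflTransGen {K : Set V} (hBT : B ⊆ T) (hKT : K ⊆ T)
    (hT : paSet E T = ∅) (hS : paSet E S = ∅) (h : ReflTransGen E x y) (hx : x ∉ T)
    (hy : y ∈ S) : ReflTransGen (avoidRel (moralDelOut E B S) K) y x := by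
  revert hx
  induction h using ReflTransGen.head_induction_on with
  | refl => exact fun _ => .refl
  | @head x z hxz hzy ih =>
    intro hx
    have hz : z ∉ T := fun hz => hx (mem_of_reflTransGen_of_paSet_eq_empty hT (.single hxz) hz)
    rcases eq_or_ne x z with rfl | hne
    · exact ih hz
    have hzS := mem_of_reflTransGen_of_paSet_eq_empty hS hzy hy
    have hxS := mem_of_reflTransGen_of_paSet_eq_empty hS (.single hxz) hzS
    exact (ih hz).tail ⟨moralDelOut_comm.1 (moralDelOut_of_edge hxz (hx <| hBT ·) hxS hzS hne),
      (hz <| hKT ·), (hx <| hKT ·)⟩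

theorem reflTransGen_avoidRel_of_left_contraction (hT : paSet E T = ∅) (hS : paSet E S = ∅)
    (hAT : A ⊆ T) (hBT : B ⊆ T) (hCT : C ⊆ T) (hDS : D ⊆ S)
    (hST : ∀ x ∈ S, x ∉ T → ∃ d ∈ D, ReflTransGen E x d)
    (h1 : ∀ v ∈ A \ (B ∪ C), ∀ w ∈ B,
      ¬ ReflTransGen (avoidRel (moralDelOut E B T) (C \ B)) v w)
    (h2 : ∀ d ∈ D \ (B ∪ (A ∪ C)), ∀ w ∈ B,
      ¬ ReflTransGen (avoidRel (moralDelOut E B S) ((A ∪ C) \ B)) d w)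
    (hw : w ∈ B) (h : ReflTransGen (avoidRel (moralDelOut E B S) (C \ B)) x w) :
    ReflTransGen (avoidRel (moralDelOut E B S) ((A ∪ C) \ B)) x w ∧
      ReflTransGen (avoidRel (moralDelOut E B T) (C \ B)) x w := by
  have hKT : (A ∪ C) \ B ⊆ T := sdiff_subset.trans (union_subset hAT hCT)
  have escape : ∀ u ∈ S, u ∉ T → ∃ d ∈ D \ (B ∪ (A ∪ C)),
      ReflTransGen (avoidRel (moralDelOut E B S) ((A ∪ C) \ B)) d u := by
    intro u hu huT
    obtain ⟨d, hd, hud⟩ := hST u hu huT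
    have hdT : d ∉ T := fun hdT => huT (mem_of_reflTransGen_of_paSet_eq_empty hT hud hdT)
    exact ⟨d, ⟨hd, (hdT <| union_subset hBT (union_subset hAT hCT) ·)⟩,
      reflTransGen_avoidRel_of_reflTransGen hBT hKT hT hS hud huT (hDS hd)⟩
  have notMem : ∀ z, z ∉ C \ B → ReflTransGen (avoidRel (moralDelOut E B T) (C \ B)) z w →
      z ∉ (A ∪ C) \ B := by
    refine fun z hz hzw hzK => h1 z ?_ w hw hzw
    simp only [mem_sdiff, mem_union] at hz hzK ⊢
    tauto
  induction h using ReflTransGen.head_induction_on with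
  | refl => exact ⟨.refl, .refl⟩
  | @head x y hxy _ ih =>
    obtain ⟨hyw, hywT⟩ := ih
    have hyT : y ∈ T := by
      rcases hywT.cases_head with rfl | ⟨z, hyz, -⟩
      exacts [hBT hw, hyz.1.mem_left]
    have hyK := notMem y hxy.2.2 hywT
    have hxyT : moralDelOut E B T x y := by
      by_contra hn
      obtain ⟨u, huS, huT, huy⟩ := exists_moralDelOut_not_mem hxy.1 hyT hn
      obtain ⟨d, hd, hdu⟩ := escape u huS huT
      exact h2 d hd w hw (hdu.trans (.head ⟨huy, (huT <| hKT ·), hyK⟩ hyw))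
    have hxwT : ReflTransGen (avoidRel (moralDelOut E B T) (C \ B)) x w := .head ⟨hxyT, hxy.2⟩ hywT
    exact ⟨.head ⟨hxy.1, notMem x hxy.2.1 hxwT, hyK⟩ hyw, hxwT⟩

end

theorem deltaSep_left_contraction_general (E : V → V → Prop) (A B C D : Set V)
    (h1 : deltaSep E A B C) (h2 : deltaSep E D B (A ∪ C)) :
    deltaSep E (A ∪ D) B C := by
  have hW : D \ (B ∪ (A ∪ C)) ∪ B ∪ (A ∪ C) \ B = (A ∪ D) \ (B ∪ C) ∪ B ∪ C \ B := by
    ext; simp only [mem_union, mem_sdiff]; tauto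
  unfold deltaSep deltaSepDisjoint at h1 h2 ⊢
  rw [hW] at h2
  set T := AnSet E (A \ (B ∪ C) ∪ B ∪ C \ B)
  set S := AnSet E ((A ∪ D) \ (B ∪ C) ∪ B ∪ C \ B)
  have hABCT : A ∪ B ∪ C ⊆ T := fun x hx =>
    subset_AnSet (by simp only [mem_union, mem_sdiff] at hx ⊢; tauto)
  obtain ⟨⟨hAT, hBT⟩, hCT⟩ := union_subset_iff.1 hABCT |>.imp_left union_subset_iff.1
  have hDS : D ⊆ S := fun x hx => subset_AnSet (by simp only [mem_union, mem_sdiff]; tauto)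
  have hST : ∀ x ∈ S, x ∉ T → ∃ d ∈ D, ReflTransGen E x d := by
    intro x hx hxT
    obtain ⟨a, ha, hxa⟩ := mem_AnSet_iff.1 hx
    refine ⟨a, by_contra fun had => hxT ?_, hxa⟩
    refine mem_of_reflTransGen_of_paSet_eq_empty paSet_AnSet hxa (hABCT ?_)
    simp only [mem_union, mem_sdiff] at ha ⊢
    tauto
  rw [uSep_iff (disjoint_sdiff_left.mono_right subset_union_left) disjoint_sdiff_right] at h1 h2 ⊢
  rintro v ⟨hv, hvBC⟩ w hw hvw
  obtain ⟨hvwS, hvwT⟩ := reflTransGen_avoidRel_of_left_contraction paSet_AnSet paSet_AnSet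
    hAT hBT hCT hDS hST h1 h2 hw hvw
  by_cases hvA : v ∈ A
  · exact h1 v ⟨hvA, hvBC⟩ w hw hvwT
  · exact h2 v ⟨hv.resolve_left hvA, by simp only [mem_union] at hvBC ⊢; tauto⟩ w hw hvwS

/-- Left contraction for δ-separation. -/
theorem deltaSep_left_contraction [Fintype V] (E : V → V → Prop)
    (hE : ∀ j k, E j k → j ≠ k) (A B C D : Set V)
    (h1 : deltaSep E A B C) (h2 : deltaSep E D B (A ∪ C)) :
    deltaSep E (A ∪ D) B C :=
  deltaSep_left_contraction_general E A B C D h1 h2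
end

section
/- Left intersection for δ-separation: for any directed graph G = (V,E) and any subsets A, B, C ⊆ V, if C δ-separates A from B in G (A ir_δ B | C) and A δ-separates C from B in G (C ir_δ B | A), then A ∩ C δ-separates A ∪ C from B in G ((A ∪ C) ir_δ B | A ∩ C). -/
open Set

variable {V : Type*}

private lemma uSep_key (H : V → V → Prop) (A' C' B I : Set V)
    (hAC : ∀ x, x ∈ A' → x ∉ C')
    (hAB : ∀ x, x ∈ A' → x ∉ B)
    (hCB : ∀ x, x ∈ C' → x ∉ B)
    (h1 : uSep H A' B (C' ∪ I)) (h2 : uSep H C' B (A' ∪ I)) :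
    uSep H (A' ∪ C') B I := by
  intro v hv w hw l hl
  suffices h : ∀ n, ∀ l : List V, ∀ v, l.length ≤ n → v ∈ A' ∪ C' →
      IsUPath H l v w → ∃ c ∈ I, c ∈ l from h l.length l v le_rfl hv hl
  clear hl hv v l
  intro n
  induction n with
  | zero =>
    intro l v hlen hv hp
    obtain ⟨_, _, hlen2, _, _⟩ := hp
    omega
  | succ n ih =>
    intro l v hlen hv hp
    obtain ⟨hchain, hnd, hlen2, hhead, hlast⟩ := hp
    have step : ∀ c, c ∈ l → c ≠ v → c ∈ A' ∪ C' → (∃ d ∈ I, d ∈ l) := by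
      intro c hcl hcv hc
      obtain ⟨l₁, l₂, rfl⟩ := List.append_of_mem hcl
      have hl1ne : l₁ ≠ [] := by
        intro h
        subst h
        simp at hhead
        exact hcv hhead
      have hlast2 : (c :: l₂).getLast? = some w := by
        rw [List.getLast?_append_cons] at hlast
        exact hlast
      have hcw : c ≠ w := by
        rintro rfl
        rcases hc with hc | hc
        · exact hAB c hc hw
        · exact hCB c hc hw
      have hl2ne : l₂ ≠ [] := by
        rintro rfl
        simp at hlast2
        exact hcw hlast2
      have hlen' : (c :: l₂).length ≤ n := by
        have := List.length_pos_iff.mpr hl1ne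
        simp [List.length_append] at hlen ⊢
        omega
      have hlen2' : 2 ≤ (c :: l₂).length := by
        have := List.length_pos_iff.mpr hl2ne
        simp
        omega
      have hpath : IsUPath H (c :: l₂) c w :=
        ⟨hchain.suffix ⟨l₁, rfl⟩, (hnd.sublist (List.sublist_append_right l₁ _)),
          hlen2', rfl, hlast2⟩
      obtain ⟨d, hd, hdl⟩ := ih (c :: l₂) c hlen' hc hpath
      exact ⟨d, hd, List.mem_append.mpr (Or.inr hdl)⟩
    rcases hv with hv | hv
    · obtain ⟨c, hc, hcl⟩ := h1 v hv w hw l ⟨hchain, hnd, hlen2, hhead, hlast⟩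
      rcases hc with hc | hc
      · have hcv : c ≠ v := fun h => hAC v hv (h ▸ hc)
        exact step c hcl hcv (Or.inr hc)
      · exact ⟨c, hc, hcl⟩
    · obtain ⟨c, hc, hcl⟩ := h2 v hv w hw l ⟨hchain, hnd, hlen2, hhead, hlast⟩
      rcases hc with hc | hc
      · have hcv : c ≠ v := fun h => hAC c hc (h ▸ hv)
        exact step c hcl hcv (Or.inl hc)
      · exact ⟨c, hc, hcl⟩

/-- Left intersection for δ-separation. -/
theorem deltaSep_left_intersection [Fintype V] (E : V → V → Prop)
    (hE : ∀ j k, E j k → j ≠ k) (A B C : Set V)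
    (h1 : deltaSep E A B C) (h2 : deltaSep E C B A) :
    deltaSep E (A ∪ C) B (A ∩ C) := by
  unfold deltaSep deltaSepDisjoint at h1 h2 ⊢
  have e1 : A \ (B ∪ C) ∪ B ∪ C \ B = A ∪ B ∪ C := by ext x; simp; tauto
  have e2 : C \ (B ∪ A) ∪ B ∪ A \ B = A ∪ B ∪ C := by ext x; simp; tauto
  have e3 : (A ∪ C) \ (B ∪ A ∩ C) ∪ B ∪ (A ∩ C) \ B = A ∪ B ∪ C := by
    ext x; simp; tauto
  rw [e1] at h1
  rw [e2] at h2
  rw [e3]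
  have e4 : (A ∪ C) \ (B ∪ A ∩ C) = (A \ (B ∪ C)) ∪ (C \ (B ∪ A)) := by
    ext x; simp; tauto
  have e5 : C \ B = (C \ (B ∪ A)) ∪ ((A ∩ C) \ B) := by ext x; simp; tauto
  have e6 : A \ B = (A \ (B ∪ C)) ∪ ((A ∩ C) \ B) := by ext x; simp; tauto
  rw [e4]
  rw [e5] at h1
  rw [e6] at h2
  exact uSep_key _ _ _ _ _
    (by intro x hx; simp at hx ⊢; tauto)
    (by intro x hx; simp at hx ⊢; tauto)
    (by intro x hx; simp at hx ⊢; tauto)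
    h1 h2
end

section
/- Right intersection for δ-separation: for any directed graph G = (V,E) and any subsets A, B, C ⊆ V, if C δ-separates A from B in G (A ir_δ B | C) and B δ-separates A from C in G (A ir_δ C | B), then B ∩ C δ-separates A from B ∪ C in G (A ir_δ (B ∪ C) | B ∩ C). -/
open Set

variable {V : Type*}

/-!
All three δ-separations live in moral graphs on the same vertex set `An(A ∪ B ∪ C)`, and the
conclusion, whose separating set `(B ∩ C) \ (B ∪ C)` is empty, says that no path of the moral
graph of `G^{B ∪ C}` joins `A \ (B ∪ C)` to `B ∪ C`. Cut such a path at its first vertex `u` in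
`B ∪ C`. Deleting fewer edges only enlarges the moral graph, so for `u ∈ B` the cut path lies in
the graph of the first hypothesis and must meet `C \ B`; but its only vertex in `B ∪ C` is `u`.
The case `u ∈ C` is symmetric.
-/

theorem moralGraph_mono : Monotone (moralGraph : (V → V → Prop) → V → V → Prop) :=
  fun _ _ h j k ⟨hne, hjk⟩ =>
    ⟨hne, hjk.imp (h j k) (Or.imp (h k j) fun ⟨c, hj, hk⟩ => ⟨c, h j c hj, h k c hk⟩)⟩

theorem inducedGraph_mono (S : Set V) : Monotone (inducedGraph · S) :=
  fun _ _ h j k ⟨hjk, hj, hk⟩ => ⟨h j k hjk, hj, hk⟩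

theorem delOut_anti (E : V → V → Prop) : Antitone (delOut E) :=
  fun _ _ h _ _ ⟨hjk, hj⟩ => ⟨hjk, fun hj' => hj (h hj')⟩

theorem IsUPath.mono {H H' : V → V → Prop} (h : H ≤ H') {l : List V} {v w : V}
    (hl : IsUPath H l v w) : IsUPath H' l v w :=
  ⟨hl.1.imp fun a b => h a b, hl.2⟩

theorem IsUPath.exists_first_mem {H : V → V → Prop} {l : List V} {v w : V} {S : Set V}
    (hl : IsUPath H l v w) (hv : v ∉ S) (hw : w ∈ S) :
    ∃ u ∈ S, ∃ l', IsUPath H l' v u ∧ ∀ x ∈ l', x ∈ S → x = u := by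
  classical
  obtain ⟨hchain, hnodup, -, hhead, hlast⟩ := hl
  have hfind : (l.find? (· ∈ S)).isSome :=
    List.find?_isSome.mpr ⟨w, List.mem_of_getLast? hlast, by simpa using hw⟩
  obtain ⟨u, hu⟩ := Option.isSome_iff_exists.mp hfind
  obtain ⟨huS, pre, post, rfl, hpre⟩ := List.find?_eq_some_iff_append.mp hu
  have huS : u ∈ S := by simpa using huS
  have hpre : ∀ x ∈ pre, x ∉ S := by simpa using hpre
  obtain ⟨a, pre, rfl⟩ : ∃ a pre', pre = a :: pre' := by
    cases pre with
    | nil => exact absurd (by simpa using hhead) (ne_of_mem_of_not_mem huS hv)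
    | cons a pre' => exact ⟨a, pre', rfl⟩
  refine ⟨u, huS, a :: pre ++ [u],
    ⟨?_, ?_, by simp, by simpa using hhead, List.getLast?_concat⟩, ?_⟩
  · exact hchain.prefix ⟨post, by simp⟩
  · exact hnodup.sublist (by simp)
  · intro x hx hxS
    simp only [List.mem_append, List.mem_singleton] at hx
    exact hx.resolve_left fun hx' => hpre x hx' hxS

theorem deltaSep_iff {E : V → V → Prop} {A B C : Set V} :
    deltaSep E A B C ↔
      uSep (moralGraph (inducedGraph (delOut E B) (AnSet E (A ∪ B ∪ C)))) (A \ (B ∪ C)) B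
        (C \ B) := by
  rw [deltaSep, deltaSepDisjoint,
    show A \ (B ∪ C) ∪ B ∪ C \ B = A ∪ B ∪ C by ext; simp; tauto]

theorem uSep_union_empty_of_uSep_diff {H H₁ H₂ : V → V → Prop} {X B C : Set V}
    (hX : Disjoint X (B ∪ C)) (h₁ : H ≤ H₁) (h₂ : H ≤ H₂)
    (hB : uSep H₁ X B (C \ B)) (hC : uSep H₂ X C (B \ C)) :
    uSep H X (B ∪ C) ∅ := by
  intro v hv w hw l hl
  obtain ⟨u, hu, l', hl', hfirst⟩ := hl.exists_first_mem (hX.notMem_of_mem_left hv) hw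
  exfalso
  rcases hu with huB | huC
  · obtain ⟨c, ⟨hcC, hcB⟩, hc⟩ := hB v hv u huB l' (hl'.mono h₁)
    exact hcB (hfirst c hc (Or.inr hcC) ▸ huB)
  · obtain ⟨c, ⟨hcB, hcC⟩, hc⟩ := hC v hv u huC l' (hl'.mono h₂)
    exact hcC (hfirst c hc (Or.inl hcB) ▸ huC)

theorem deltaSep_right_intersection_general (E : V → V → Prop) (A B C : Set V)
    (h1 : deltaSep E A B C) (h2 : deltaSep E A C B) :
    deltaSep E A (B ∪ C) (B ∩ C) := by
  have hBC : B ∩ C ⊆ B ∪ C := inter_subset_left.trans subset_union_left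
  rw [deltaSep_iff] at h1 h2 ⊢
  rw [union_right_comm, union_comm C B] at h2
  rw [union_assoc A, union_eq_self_of_subset_right hBC, sdiff_eq_empty.mpr hBC, ← union_assoc]
  have hanti := moralGraph_mono.comp_antitone
    ((inducedGraph_mono (AnSet E (A ∪ B ∪ C))).comp_antitone (delOut_anti E))
  exact uSep_union_empty_of_uSep_diff disjoint_sdiff_left (hanti subset_union_left)
    (hanti subset_union_right) h1 h2

/-- Right intersection for δ-separation. -/
theorem deltaSep_right_intersection [Fintype V] (E : V → V → Prop)
    (hE : ∀ j k, E j k → j ≠ k) (A B C : Set V)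
    (h1 : deltaSep E A B C) (h2 : deltaSep E A C B) :
    deltaSep E A (B ∪ C) (B ∩ C) :=
  deltaSep_right_intersection_general E A B C h1 h2
end

section
/- Combined left intersection for δ-separation: for any directed graph G = (V,E) and pairwise disjoint subsets A, B, C, D ⊆ V, if C ∪ D δ-separates A from B in G (A ir_δ B | C ∪ D) and A ∪ D δ-separates C from B in G (C ir_δ B | A ∪ D), then D δ-separates A ∪ C from B in G ((A ∪ C) ir_δ B | D). -/
open Set

variable {V : Type*}

/-!
All three separation statements take place in the same moral graph, that of `G^B` restricted to
`An(A ∪ B ∪ C ∪ D)`. There, a path from `A ∪ C` to `B` avoiding `D` must meet `C` if it starts in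
`A` and `A` if it starts in `C`; restarting from that vertex gives a strictly shorter such path,
which is impossible forever.
-/

theorem IsUPath.suffix {H : V → V → Prop} {l : List V} {v w c : V}
    (hp : IsUPath H l v w) (hc : c ∈ l) (hcw : c ≠ w) :
    ∃ l₁ l₂, l = l₁ ++ c :: l₂ ∧ IsUPath H (c :: l₂) c w := by
  obtain ⟨hch, hnd, -, -, hlast⟩ := hp
  obtain ⟨l₁, l₂, rfl⟩ := List.append_of_mem hc
  refine ⟨l₁, l₂, rfl, (List.isChain_append.mp hch).2.1,
    hnd.sublist (List.sublist_append_right _ _), ?_, rfl, ?_⟩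
  · cases l₂ with
    | nil => exact absurd (by simpa using hlast) hcw
    | cons _ _ => simp
  · rw [List.getLast?_append, List.getLast?_cons] at hlast
    simpa [List.getLast?_cons] using hlast

theorem uSep.combined_left_intersection {H : V → V → Prop} {A B C D : Set V}
    (hAB : Disjoint A B) (hAC : Disjoint A C) (hBC : Disjoint B C)
    (h1 : uSep H A B (C ∪ D)) (h2 : uSep H C B (A ∪ D)) :
    uSep H (A ∪ C) B D := by
  intro v hv w hw l hp
  induction l using (measure List.length).wf.induction generalizing v with
  | h l ih =>
    by_contra! hD
    -- as `l` avoids `D`, the separator vertex on `l` lies in the one of `A`, `C` not containing `v`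
    have hnext : ∃ c ∈ A ∪ C, c ≠ v ∧ c ∈ l := by
      rcases hv with hvA | hvC
      · obtain ⟨c, hc | hc, hcl⟩ := h1 v hvA w hw l hp
        · exact ⟨c, .inr hc, fun h => hAC.ne_of_mem hvA hc h.symm, hcl⟩
        · exact absurd hcl (hD c hc)
      · obtain ⟨c, hc | hc, hcl⟩ := h2 v hvC w hw l hp
        · exact ⟨c, .inl hc, fun h => hAC.ne_of_mem hc hvC h, hcl⟩
        · exact absurd hcl (hD c hc)
    obtain ⟨c, hc, hcv, hcl⟩ := hnext
    have hcw : c ≠ w := by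
      rcases hc with hc | hc
      · exact hAB.ne_of_mem hc hw
      · exact (hBC.ne_of_mem hw hc).symm
    obtain ⟨l₁, l₂, rfl, hp'⟩ := hp.suffix hcl hcw
    have hl₁ : l₁ ≠ [] := by
      rintro rfl
      exact hcv (by simpa using hp.2.2.2.1)
    have hshorter : (c :: l₂).length < (l₁ ++ c :: l₂).length := by
      simp [List.length_pos_iff.mpr hl₁]
    obtain ⟨d, hd, hdl⟩ := ih _ hshorter c hc hp'
    exact hD d hd (List.mem_append_right l₁ hdl)

theorem deltaSep_eq_deltaSepDisjoint {E : V → V → Prop} {A B C : Set V}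
    (hAB : Disjoint A B) (hAC : Disjoint A C) (hBC : Disjoint B C) :
    deltaSep E A B C = deltaSepDisjoint E A B C := by
  rw [deltaSep, sdiff_eq_left.mpr (hAB.union_right hAC), sdiff_eq_left.mpr hBC.symm]

theorem deltaSep_combined_left_intersection_general (E : V → V → Prop)
    (A B C D : Set V)
    (hAB : Disjoint A B) (hAC : Disjoint A C) (hAD : Disjoint A D)
    (hBC : Disjoint B C) (hBD : Disjoint B D) (hCD : Disjoint C D)
    (h1 : deltaSep E A B (C ∪ D)) (h2 : deltaSep E C B (A ∪ D)) :
    deltaSep E (A ∪ C) B D := by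
  rw [deltaSep_eq_deltaSepDisjoint hAB (hAC.union_right hAD) (hBC.union_right hBD)] at h1
  rw [deltaSep_eq_deltaSepDisjoint hBC.symm (hAC.symm.union_right hCD)
    (hAB.symm.union_right hBD)] at h2
  rw [deltaSep_eq_deltaSepDisjoint (hAB.union_left hBC.symm) (hAD.union_left hCD) hBD]
  have hCB_union : C ∪ B ∪ (A ∪ D) = A ∪ B ∪ (C ∪ D) := by
    ext x; simp only [Set.mem_union]; tauto
  have hACB_union : A ∪ C ∪ B ∪ D = A ∪ B ∪ (C ∪ D) := by
    ext x; simp only [Set.mem_union]; tauto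
  unfold deltaSepDisjoint at h1 h2 ⊢
  rw [hCB_union] at h2
  rw [hACB_union]
  exact h1.combined_left_intersection hAB hAC hBC h2

/-- Combined left intersection for δ-separation (pairwise disjoint sets). -/
theorem deltaSep_combined_left_intersection [Fintype V] (E : V → V → Prop)
    (hE : ∀ j k, E j k → j ≠ k) (A B C D : Set V)
    (hAB : Disjoint A B) (hAC : Disjoint A C) (hAD : Disjoint A D)
    (hBC : Disjoint B C) (hBD : Disjoint B D) (hCD : Disjoint C D)
    (h1 : deltaSep E A B (C ∪ D)) (h2 : deltaSep E C B (A ∪ D)) :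
    deltaSep E (A ∪ C) B D :=
  deltaSep_combined_left_intersection_general E A B C D hAB hAC hAD hBC hBD hCD h1 h2
end

section
/- For any directed graph G = (V,E) and any vertex k ∈ V, the parent set pa({k}) δ-separates V \ cl({k}) from {k} in G; that is, (V \ cl({k})) ir_δ {k} | pa({k}). -/
open Set

variable {V : Type*}

/-- The parent set `pa({k})` δ-separates `V \ cl({k})` from `{k}`. -/
theorem deltaSep_parents [Fintype V] (E : V → V → Prop)
    (hE : ∀ j k, E j k → j ≠ k) (k : V) :
    deltaSep E (Set.univ \ clSet E {k}) {k} (paSet E {k}) := by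
  intro v hv w hw l hl
  obtain ⟨hc, hnd, hlen, hhead, hlast⟩ := hl
  have hwk : w = k := hw
  have hrlen : 2 ≤ l.reverse.length := by simpa using hlen
  obtain ⟨a, t, hrt⟩ : ∃ a t, l.reverse = a :: t := by
    cases hr : l.reverse with
    | nil => simp [hr] at hrlen
    | cons a t => exact ⟨a, t, rfl⟩
  obtain ⟨b, t', hrt'⟩ : ∃ b t', t = b :: t' := by
    cases ht : t with
    | nil => simp [hrt, ht] at hrlen
    | cons b t' => exact ⟨b, t', rfl⟩
  subst hrt'
  have hak : a = w := by
    have : l.reverse.head? = some w := by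
      rw [List.head?_reverse]; exact hlast
    simpa [hrt] using this
  have hcr := List.isChain_reverse.mpr hc
  rw [hrt] at hcr
  have hbk := (List.isChain_cons_cons.mp hcr).1
  rw [hak, hwk] at hbk
  obtain ⟨hne, hcase⟩ := hbk
  have hbpa : b ∈ paSet E {k} := by
    rcases hcase with h | h | ⟨c, _, h⟩
    · exact ⟨by simpa using hne, k, rfl, h.1.1⟩
    · exact absurd h.1.2 (by simp)
    · exact absurd h.1.2 (by simp)
  refine ⟨b, ⟨hbpa, by simpa using hne⟩, ?_⟩
  have : b ∈ l.reverse := by rw [hrt]; simp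
  simpa using this
end

section
/- Let G = (V,E) be a directed graph and A, B, C ⊆ V pairwise disjoint sets such that A ∪ B ∪ C is ancestral (i.e., pa(A ∪ B ∪ C) = ∅). Then for every vertex γ ∈ V \ (A ∪ B ∪ C), the set A ∪ C δ-separates {γ} from B in G; that is, {γ} ir_δ B | (A ∪ C). -/
open Set

variable {V : Type*}

/-! A path from `γ` to `B` in the moral graph starts outside the ancestral set `A ∪ B ∪ C` and
ends inside it, so some edge `y — x` enters it. As `y` is not a parent of `x`, that moral edge
comes from an edge `x → y` or from a common child of `x` and `y`; either way `x` keeps an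
out-edge in `G^B`, so `x ∉ B` and hence `x ∈ A ∪ C`. -/

theorem List.IsChain.exists_rel_mem_of_head_notMem {α : Type*} {R : α → α → Prop} {S : Set α}
    {l : List α} {v w : α} (hl : l.IsChain R) (hhead : l.head? = some v) (hv : v ∉ S)
    (hw : w ∈ l) (hwS : w ∈ S) : ∃ y ∉ S, ∃ x ∈ l, x ∈ S ∧ R y x := by
  by_contra! hno
  have hchain : l.IsChain (fun y x => x ∈ l ∧ R y x) :=
    hl.imp_of_mem_imp fun _ _ _ hx hyx => ⟨hx, hyx⟩
  have hout : ∀ x ∈ l, x ∉ S :=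
    List.IsChain.induction (· ∉ S) l hchain (fun y x ⟨hxl, hyx⟩ hy hx => hno y hy x hxl hx hyx)
      fun hne => by
        rw [List.head?_eq_some_head hne, Option.some_inj] at hhead
        rwa [hhead]
  exact hout w hw hwS

theorem notMem_of_moralGraph_of_paSet_eq_empty {E : V → V → Prop} {B S X : Set V}
    (hS : paSet E S = ∅) {y x : V} (hyx : moralGraph (inducedGraph (delOut E B) X) y x)
    (hy : y ∉ S) (hx : x ∈ S) : x ∉ B := by
  obtain ⟨-, ⟨⟨hyx, -⟩, -⟩ | ⟨⟨-, hxB⟩, -⟩ | ⟨-, -, ⟨-, hxB⟩, -⟩⟩ := hyx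
  · exact absurd ⟨hy, x, hx, hyx⟩ (hS ▸ Set.notMem_empty y)
  all_goals exact hxB

theorem deltaSep_of_ancestral_general (E : V → V → Prop) (A B C : Set V)
    (hAnc : paSet E (A ∪ B ∪ C) = ∅) (γ : V) (hγ : γ ∈ Set.univ \ (A ∪ B ∪ C)) :
    deltaSep E {γ} B (A ∪ C) := by
  rintro v ⟨rfl, -⟩ w hw l ⟨hchain, -, -, hhead, hlast⟩
  obtain ⟨y, hy, x, hxl, hx, hyx⟩ := hchain.exists_rel_mem_of_head_notMem hhead hγ.2
    (List.mem_of_getLast? hlast) (Or.inl (Or.inr hw))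
  have hxB := notMem_of_moralGraph_of_paSet_eq_empty hAnc hyx hy hx
  exact ⟨x, ⟨by simpa [hxB] using hx, hxB⟩, hxl⟩

/-- If `A ∪ B ∪ C` is ancestral and `γ ∉ A ∪ B ∪ C`, then `A ∪ C`
δ-separates `{γ}` from `B`. -/
theorem deltaSep_of_ancestral [Fintype V] (E : V → V → Prop)
    (hE : ∀ j k, E j k → j ≠ k) (A B C : Set V)
    (hAB : Disjoint A B) (hAC : Disjoint A C) (hBC : Disjoint B C)
    (hAnc : paSet E (A ∪ B ∪ C) = ∅) (γ : V) (hγ : γ ∈ Set.univ \ (A ∪ B ∪ C)) :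
    deltaSep E {γ} B (A ∪ C) :=
  deltaSep_of_ancestral_general E A B C hAnc γ hγ
end

section
/- Let G = (V,E) be a directed graph, let A, B, C ⊆ V be pairwise disjoint, and let γ ∈ an(A ∪ B ∪ C) \ (A ∪ B ∪ C). If A ⊥_g {γ} | (B ∪ C) holds in the undirected graph (G^B_{An(A∪B∪C)})^m, then B ∪ C δ-separates A from {γ} in G; that is, A ir_δ {γ} | (B ∪ C). -/
open Set

variable {V : Type*}

/-! Since `γ` is an ancestor of `A ∪ B ∪ C`, the ancestral set used for δ-separation of `A`
from `{γ}` is contained in `An(A ∪ B ∪ C)`. A path from `A` to `γ` avoiding `B ∪ C` has no vertex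
in `B`, and moral adjacency of two vertices depends only on their out-edges, which `G^B` keeps
for vertices outside `B`; so the path also lives in `(G^B_{An(A ∪ B ∪ C)})^m`, where it must
meet `B ∪ C`. -/

section Ancestors

variable {E : V → V → Prop}

/- A walk is shortened to a path by prepending its edges one at a time: when the new
first vertex already lies on the path, cut the path back to its later occurrence. -/
lemma exists_nodup_isChain_of_reflTransGen {v w : V} (h : Relation.ReflTransGen E v w) :
    ∃ l : List V, l.IsChain E ∧ l.Nodup ∧ l.head? = some v ∧ l.getLast? = some w := by
  induction h using Relation.ReflTransGen.head_induction_on with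
  | refl => exact ⟨[w], List.isChain_singleton w, List.nodup_singleton w, rfl, rfl⟩
  | @head v u hvu _ ih =>
    obtain ⟨l, hchain, hnodup, hhead, hlast⟩ := ih
    by_cases hv : v ∈ l
    · obtain ⟨l₁, l₂, rfl⟩ := List.append_of_mem hv
      refine ⟨v :: l₂, hchain.right_of_append, hnodup.sublist (List.sublist_append_right _ _),
        rfl, ?_⟩
      rwa [List.getLast?_append_cons] at hlast
    · obtain ⟨u', l', rfl⟩ := List.exists_cons_of_ne_nil (l := l) (by rintro rfl; simp at hhead)
      obtain rfl : u' = u := by simpa using hhead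
      exact ⟨v :: u' :: l', hchain.cons_cons hvu, List.nodup_cons.2 ⟨hv, hnodup⟩, rfl,
        by simpa using hlast⟩

lemma DirPathConn.of_reflTransGen {v w : V} (h : Relation.ReflTransGen E v w) (hvw : v ≠ w) :
    DirPathConn E v w := by
  obtain ⟨l, hchain, hnodup, hhead, hlast⟩ := exists_nodup_isChain_of_reflTransGen h
  refine ⟨l, hchain, hnodup, ?_, hhead, hlast⟩
  match l with
  | [] => simp at hhead
  | [a] => simp_all
  | _ :: _ :: _ => simp

lemma DirPathConn.reflTransGen {v w : V} (h : DirPathConn E v w) :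
    Relation.ReflTransGen E v w := by
  obtain ⟨l, hchain, -, -, hhead, hlast⟩ := h
  have hne : l ≠ [] := by rintro rfl; simp at hhead
  rw [List.head?_eq_some_head hne, Option.some_inj] at hhead
  rw [List.getLast?_eq_some_getLast hne, Option.some_inj] at hlast
  exact hhead ▸ hlast ▸ List.relationReflTransGen_of_exists_isChain l hchain hne

lemma DirPathConn.trans {u v w : V} (huv : DirPathConn E u v) (hvw : DirPathConn E v w)
    (huw : u ≠ w) : DirPathConn E u w :=
  .of_reflTransGen (huv.reflTransGen.trans hvw.reflTransGen) huw

lemma mem_AnSet_iff_s14 {S : Set V} {v : V} :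
    v ∈ AnSet E S ↔ v ∈ S ∨ ∃ a ∈ S, DirPathConn E v a := by
  by_cases hv : v ∈ S <;> simp [AnSet, anSet, hv]

lemma AnSet_subset_of_subset_AnSet {S T : Set V} (h : S ⊆ AnSet E T) :
    AnSet E S ⊆ AnSet E T := by
  intro v hv
  rcases mem_AnSet_iff_s14.1 hv with hvS | ⟨a, haS, hva⟩
  · exact h hvS
  rcases mem_AnSet_iff_s14.1 (h haS) with haT | ⟨b, hbT, hab⟩
  · exact mem_AnSet_iff_s14.2 (.inr ⟨a, haT, hva⟩)
  by_cases hvb : v = b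
  · exact mem_AnSet_iff_s14.2 (.inl (hvb ▸ hbT))
  · exact mem_AnSet_iff_s14.2 (.inr ⟨b, hbT, hva.trans hab hvb⟩)

end Ancestors

lemma moralGraph.imp_children {F F' : V → V → Prop} {a b : V} (h : moralGraph F a b)
    (ha : ∀ c, F a c → F' a c) (hb : ∀ c, F b c → F' b c) : moralGraph F' a b := by
  obtain ⟨hne, hab | hba | ⟨c, hac, hbc⟩⟩ := h
  · exact ⟨hne, .inl (ha b hab)⟩
  · exact ⟨hne, .inr (.inl (hb a hba))⟩
  · exact ⟨hne, .inr (.inr ⟨c, ha c hac, hb c hbc⟩)⟩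

lemma IsUPath.imp_of_mem {H H' : V → V → Prop} {l : List V} {v w : V} (hl : IsUPath H l v w)
    (himp : ∀ a ∈ l, ∀ b ∈ l, H a b → H' a b) : IsUPath H' l v w :=
  ⟨hl.1.imp_of_mem_imp fun a b ha hb => himp a ha b hb, hl.2⟩

theorem deltaSep_of_uSep_ancestor_general (E : V → V → Prop) (A B C : Set V)
    (γ : V) (hγ : γ ∈ anSet E (A ∪ B ∪ C) \ (A ∪ B ∪ C))
    (h : uSep (moralGraph (inducedGraph (delOut E B) (AnSet E (A ∪ B ∪ C))))
      A {γ} (B ∪ C)) :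
    deltaSep E A {γ} (B ∪ C) := by
  obtain ⟨hγan, hγABC⟩ := hγ
  have hγBC : γ ∉ B ∪ C := fun hγBC => hγABC (union_assoc A B C ▸ Or.inr hγBC)
  have hAn : AnSet E (A \ ({γ} ∪ (B ∪ C)) ∪ {γ} ∪ ((B ∪ C) \ {γ})) ⊆ AnSet E (A ∪ B ∪ C) := by
    refine AnSet_subset_of_subset_AnSet ?_
    rintro x ((⟨hxA, -⟩ | rfl) | ⟨hxBC, -⟩)
    · exact .inl (.inl (.inl hxA))
    · exact .inr hγan
    · exact .inl (union_assoc A B C ▸ Or.inr hxBC)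
  intro v hv w hw l hl
  by_contra! hlBC
  have hlB : ∀ x ∈ l, x ∉ B := fun x hxl hxB =>
    hlBC x ⟨.inl hxB, fun hxγ => hγBC (.inl (hxγ ▸ hxB))⟩ hxl
  have hout : ∀ x ∈ l, ∀ c, inducedGraph (delOut E {γ}) (AnSet E _) x c →
      inducedGraph (delOut E B) (AnSet E (A ∪ B ∪ C)) x c :=
    fun x hxl c ⟨⟨hxc, _⟩, hx, hc⟩ => ⟨⟨hxc, hlB x hxl⟩, hAn hx, hAn hc⟩
  obtain ⟨c, hcBC, hcl⟩ := h v hv.1 γ rfl l <| (mem_singleton_iff.1 hw ▸ hl).imp_of_mem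
    fun a ha b hb hab => hab.imp_children (hout a ha) (hout b hb)
  exact hlBC c ⟨hcBC, fun hcγ => hγBC (hcγ ▸ hcBC)⟩ hcl

/-- If `γ ∈ an(A ∪ B ∪ C) \ (A ∪ B ∪ C)` and `A ⊥_g {γ} | (B ∪ C)` holds in
the moral graph `(G^B_{An(A ∪ B ∪ C)})^m`, then `A ir_δ {γ} | (B ∪ C)`. -/
theorem deltaSep_of_uSep_ancestor [Fintype V] (E : V → V → Prop)
    (hE : ∀ j k, E j k → j ≠ k) (A B C : Set V)
    (hAB : Disjoint A B) (hAC : Disjoint A C) (hBC : Disjoint B C)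
    (γ : V) (hγ : γ ∈ anSet E (A ∪ B ∪ C) \ (A ∪ B ∪ C))
    (h : uSep (moralGraph (inducedGraph (delOut E B) (AnSet E (A ∪ B ∪ C))))
      A {γ} (B ∪ C)) :
    deltaSep E A {γ} (B ∪ C) :=
  deltaSep_of_uSep_ancestor_general E A B C γ hγ h
end
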